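/- The vector fields X = ∂₁ − λu₁∂₃ and Y = ∂₂ + (λ²u₁ − λu₂)∂₃ commute for all values of the parameter λ if and only if u satisfies u₁₁ + u₁u₂₃ − u₂u₁₃ = 0. -/

import Mathlib

/-- Partial derivative in the `i`-th coordinate direction. -/
noncomputable def pd (i : Fin 3) (f : (Fin 3 → ℝ) → ℝ) (x : Fin 3 → ℝ) : ℝ :=
  fderiv ℝ f x (Pi.single i 1)

/-- Lie bracket of vector fields on `ℝ³`, given by their coefficient functions. -/
noncomputable def lieBracket (X Y : (Fin 3 → ℝ) → Fin 3 → ℝ)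
    (x : Fin 3 → ℝ) (i : Fin 3) : ℝ :=
  ∑ j : Fin 3, (X x j * pd j (fun y => Y y i) x - Y x j * pd j (fun y => X y i) x)

/-!
With `a = -λu₁` and `b = λ²u₁ - λu₂`, the fields are `X = ∂₁ + a∂₃`, `Y = ∂₂ + b∂₃`, so `[X, Y]`
has only a `∂₃`-component, `b₁ - a₂ + a b₃ - b a₃`. Once the mixed partials of `u` are
identified, the terms in `λ` and `λ³` cancel and this component is `λ²(u₁₁ + u₁u₂₃ - u₂u₁₃)`.
-/

section Linearity

variable {f g : (Fin 3 → ℝ) → ℝ} {x : Fin 3 → ℝ}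

@[simp]
lemma pd_const (j : Fin 3) (c : ℝ) : pd j (fun _ => c) x = 0 := by
  simp [pd]

lemma pd_sub (hf : DifferentiableAt ℝ f x) (hg : DifferentiableAt ℝ g x) (j : Fin 3) :
    pd j (fun y => f y - g y) x = pd j f x - pd j g x := by
  simp [pd, fderiv_fun_sub hf hg]

lemma pd_const_mul (hf : DifferentiableAt ℝ f x) (c : ℝ) (j : Fin 3) :
    pd j (fun y => c * f y) x = c * pd j f x := by
  simp [pd, fderiv_const_mul hf]

lemma pd_neg (j : Fin 3) : pd j (fun y => -f y) x = -pd j f x := by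
  simp [pd, fderiv_fun_neg]

end Linearity

lemma differentiable_pd {u : (Fin 3 → ℝ) → ℝ} (hu : ContDiff ℝ 2 u) (i : Fin 3) :
    Differentiable ℝ (pd i u) :=
  ((hu.fderiv_right (m := 1) (by norm_num)).differentiable one_ne_zero).clm_apply
    (differentiable_const _)

lemma pd_comm {u : (Fin 3 → ℝ) → ℝ} {x : Fin 3 → ℝ} (hu : ContDiffAt ℝ 2 u x) (i j : Fin 3) :
    pd i (pd j u) x = pd j (pd i u) x := by
  have hdu : DifferentiableAt ℝ (fderiv ℝ u) x :=
    (hu.fderiv_right (m := 1) (by norm_num)).differentiableAt one_ne_zero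
  unfold pd
  rw [fderiv_clm_apply hdu (differentiableAt_const _),
    fderiv_clm_apply hdu (differentiableAt_const _)]
  simpa using (hu.isSymmSndFDerivAt (by norm_num)).eq (Pi.single i 1) (Pi.single j 1)

section Bracket

variable (a b : (Fin 3 → ℝ) → ℝ) (x : Fin 3 → ℝ)

lemma lieBracket_eq_zero_of_ne_two {i : Fin 3} (hi : i ≠ 2) :
    lieBracket (fun x => ![1, 0, a x]) (fun x => ![0, 1, b x]) x i = 0 := by
  fin_cases i
  · simp [lieBracket]
  · simp [lieBracket]
  · exact absurd rfl hi

lemma lieBracket_two :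
    lieBracket (fun x => ![1, 0, a x]) (fun x => ![0, 1, b x]) x 2 =
      pd 0 b x - pd 1 a x + a x * pd 2 b x - b x * pd 2 a x := by
  simp only [lieBracket, Fin.isValue, Matrix.cons_val, Finset.sum_sub_distrib, Fin.sum_univ_three,
    Matrix.cons_val_zero, one_mul, Matrix.cons_val_one, zero_mul, add_zero, zero_add]
  ring

end Bracket

lemma lieBracket_laxPair_two {u : (Fin 3 → ℝ) → ℝ} (hu : ContDiff ℝ 2 u) (l : ℝ)
    (x : Fin 3 → ℝ) :
    lieBracket (fun x => ![1, 0, -(l * pd 0 u x)])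
        (fun x => ![0, 1, l ^ 2 * pd 0 u x - l * pd 1 u x]) x 2 =
      l ^ 2 * (pd 0 (pd 0 u) x + pd 0 u x * pd 1 (pd 2 u) x
        - pd 1 u x * pd 0 (pd 2 u) x) := by
  have hu₀ := differentiable_pd hu 0
  have hu₁ := differentiable_pd hu 1
  have hb : ∀ j, pd j (fun y => l ^ 2 * pd 0 u y - l * pd 1 u y) x =
      l ^ 2 * pd j (pd 0 u) x - l * pd j (pd 1 u) x := fun j => by
    rw [pd_sub ((hu₀ x).const_mul _) ((hu₁ x).const_mul _), pd_const_mul (hu₀ x),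
      pd_const_mul (hu₁ x)]
  have ha : ∀ j, pd j (fun y => -(l * pd 0 u y)) x = -(l * pd j (pd 0 u) x) := fun j => by
    rw [pd_neg, pd_const_mul (hu₀ x)]
  rw [lieBracket_two, hb, hb, ha, ha, pd_comm hu.contDiffAt 1 0, pd_comm hu.contDiffAt 2 0,
    pd_comm hu.contDiffAt 2 1]
  ring

/-- The vector fields `X = ∂₁ − λu₁∂₃` and `Y = ∂₂ + (λ²u₁ − λu₂)∂₃` commute for
all values of `λ` iff `u` satisfies `u₁₁ + u₁u₂₃ − u₂u₁₃ = 0`. -/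
theorem lax_pair_11_112
    (u : (Fin 3 → ℝ) → ℝ) (hu : ContDiff ℝ 2 u) :
    (∀ l : ℝ, ∀ x, ∀ i : Fin 3,
      lieBracket
        (fun x => ![1, 0, -(l * pd 0 u x)])
        (fun x => ![0, 1, l ^ 2 * pd 0 u x - l * pd 1 u x])
        x i = 0) ↔
    (∀ x, pd 0 (pd 0 u) x + pd 0 u x * pd 1 (pd 2 u) x
        - pd 1 u x * pd 0 (pd 2 u) x = 0) := by
  constructor
  · intro hcomm x
    have h := hcomm 1 x 2
    rwa [lieBracket_laxPair_two hu, one_pow, one_mul] at h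
  · intro hpde l x i
    by_cases hi : i = 2
    · rw [hi, lieBracket_laxPair_two hu, hpde, mul_zero]
    · exact lieBracket_eq_zero_of_ne_two _ _ x hi
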